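/- Let k be an algebraically closed field and A = kQ/⟨P⟩ a gentle algebra with Q connected and not the Kronecker quiver. Then there exists a total order < on Γ≥1 such that for every f ∈ Aut^l(A) with f_α(α) ≠ 0 for all arrows α, and for all C, D ∈ Γ≥1, C < D implies f_C(D) = 0. -/

import Mathlib

open scoped Classical

namespace GentlePaper

/-- A finite quiver. -/
structure Quiv where
  V : Type
  A : Type
  [fintV : Fintype V]
  [fintA : Fintype A]
  [decV : DecidableEq V]
  [decA : DecidableEq A]
  src : A → V
  tgt : A → V

attribute [instance] Quiv.fintV Quiv.fintA Quiv.decV Quiv.decA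

/-- A set of relations of length two: `P a b` means that the length-two path
"first `a`, then `b`" (i.e. the composition `b∘a`) belongs to `P`. -/
abbrev Rels (Q : Quiv) := Q.A → Q.A → Prop

/-- Connectedness of a quiver (as an undirected graph). -/
def Connected (Q : Quiv) : Prop :=
  Nonempty Q.V ∧ ∀ v w : Q.V, Relation.ReflTransGen
    (fun x y => ∃ a : Q.A, (Q.src a = x ∧ Q.tgt a = y) ∨ (Q.src a = y ∧ Q.tgt a = x)) v w

/-- The number of cycles `c(Q) = #Q₁ - #Q₀ + 1` of a connected quiver. -/
def cQ (Q : Quiv) : ℕ := Fintype.card Q.A + 1 - Fintype.card Q.V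

/-- The conditions for `kQ/⟨P⟩` to be a gentle algebra. -/
structure IsGentle (Q : Quiv) (P : Rels Q) : Prop where
  rel_comp : ∀ a b : Q.A, P a b → Q.tgt a = Q.src b
  src_le_two : ∀ v : Q.V, Fintype.card {a : Q.A // Q.src a = v} ≤ 2
  tgt_le_two : ∀ v : Q.V, Fintype.card {a : Q.A // Q.tgt a = v} ≤ 2
  nonrel_succ_unique : ∀ b c c' : Q.A, Q.src c = Q.tgt b → Q.src c' = Q.tgt b →
    ¬ P b c → ¬ P b c' → c = c'
  nonrel_pred_unique : ∀ b a a' : Q.A, Q.tgt a = Q.src b → Q.tgt a' = Q.src b →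
    ¬ P a b → ¬ P a' b → a = a'
  rel_succ_unique : ∀ b c c' : Q.A, P b c → P b c' → c = c'
  rel_pred_unique : ∀ b a a' : Q.A, P a b → P a' b → a = a'
  bounded : ∃ N : ℕ, ∀ l : List Q.A,
    List.Chain' (fun a b => Q.tgt a = Q.src b) l → l.length = N →
      ∃ (l₁ : List Q.A) (a b : Q.A) (l₂ : List Q.A), l = l₁ ++ a :: b :: l₂ ∧ P a b

/-- Paths of a quiver: either a trivial path at a vertex, or a nonempty list of
composable arrows, recorded in traversal order. -/
def Pth (Q : Quiv) := Q.V ⊕ List Q.A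

/-- Two arrows are composable (first `a` then `b`) and do not form a relation. -/
def permPair (Q : Quiv) (P : Rels Q) (a b : Q.A) : Prop := Q.tgt a = Q.src b ∧ ¬ P a b

/-- Two arrows are composable (first `a` then `b`) and form a relation. -/
def forbPair (Q : Quiv) (P : Rels Q) (a b : Q.A) : Prop := Q.tgt a = Q.src b ∧ P a b

/-- "Nonzero path" in `kQ/⟨P⟩`: a trivial path, or a nonempty composable sequence of
arrows having no length-two subpath in `P`.  For nonempty lists this is exactly the
notion of a permitted path. -/
def pthOk (Q : Quiv) (P : Rels Q) : Pth Q → Prop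
  | Sum.inl _ => True
  | Sum.inr l => l ≠ [] ∧ List.Chain' (permPair Q P) l

/-- Start vertex of a path/thread. -/
def thStart (Q : Quiv) : Pth Q → Option Q.V
  | Sum.inl v => some v
  | Sum.inr l => l.head?.map Q.src

/-- End vertex of a path/thread. -/
def thEnd (Q : Quiv) : Pth Q → Option Q.V
  | Sum.inl v => some v
  | Sum.inr l => l.getLast?.map Q.tgt

/-- Length of a path/thread. -/
def thLen (Q : Quiv) : Pth Q → ℕ
  | Sum.inl _ => 0
  | Sum.inr l => l.length

/-- Permitted threads (trivial and non-trivial ones). -/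
def IsPermThread (Q : Quiv) (P : Rels Q) : Pth Q → Prop
  | Sum.inl v => Fintype.card {a : Q.A // Q.src a = v} ≤ 1 ∧
      Fintype.card {a : Q.A // Q.tgt a = v} ≤ 1 ∧
      ∀ b c : Q.A, Q.tgt b = v → Q.src c = v → ¬ P b c
  | Sum.inr l => l ≠ [] ∧ List.Chain' (permPair Q P) l ∧
      (∀ b : Q.A, ¬ List.Chain' (permPair Q P) (l ++ [b])) ∧
      (∀ b : Q.A, ¬ List.Chain' (permPair Q P) (b :: l))

/-- Forbidden threads (trivial and non-trivial ones). -/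
def IsForbThread (Q : Quiv) (P : Rels Q) : Pth Q → Prop
  | Sum.inl v => Fintype.card {a : Q.A // Q.src a = v} ≤ 1 ∧
      Fintype.card {a : Q.A // Q.tgt a = v} ≤ 1 ∧
      ∀ b c : Q.A, Q.tgt b = v → Q.src c = v → P b c
  | Sum.inr l => l ≠ [] ∧ l.Nodup ∧ List.Chain' (forbPair Q P) l ∧
      (∀ b : Q.A, ¬ ((l ++ [b]).Nodup ∧ List.Chain' (forbPair Q P) (l ++ [b]))) ∧
      (∀ b : Q.A, ¬ ((b :: l).Nodup ∧ List.Chain' (forbPair Q P) (b :: l)))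

/-- The axioms for the sign functions `σ, ε : Q₁ → {1,-1}`. -/
structure SgnOk (Q : Quiv) (P : Rels Q) (sg ep : Q.A → ℤ) : Prop where
  sg_pm : ∀ a : Q.A, sg a = 1 ∨ sg a = -1
  ep_pm : ∀ a : Q.A, ep a = 1 ∨ ep a = -1
  sg_opp : ∀ a b : Q.A, a ≠ b → Q.src a = Q.src b → sg a = - sg b
  ep_opp : ∀ a b : Q.A, a ≠ b → Q.tgt a = Q.tgt b → ep a = - ep b
  comp : ∀ a b : Q.A, Q.tgt a = Q.src b → ¬ P a b → sg b = - ep a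

/-- `σ` extended to permitted threads. -/
noncomputable def permSg (Q : Quiv) (sg ep : Q.A → ℤ) : Pth Q → Option ℤ
  | Sum.inl v =>
      if h : ∃ γ : Q.A, Q.src γ = v then some (-(sg h.choose))
      else if h2 : ∃ β : Q.A, Q.tgt β = v then some (ep h2.choose)
      else none
  | Sum.inr l => l.head?.map sg

/-- `ε` extended to permitted threads. -/
noncomputable def permEp (Q : Quiv) (sg ep : Q.A → ℤ) : Pth Q → Option ℤ
  | Sum.inl v => (permSg Q sg ep (Sum.inl v)).map (fun x => -x)
  | Sum.inr l => l.getLast?.map ep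

/-- `σ` extended to forbidden threads. -/
noncomputable def forbSg (Q : Quiv) (sg ep : Q.A → ℤ) : Pth Q → Option ℤ
  | Sum.inl v =>
      if h : ∃ γ : Q.A, Q.src γ = v then some (-(sg h.choose))
      else if h2 : ∃ β : Q.A, Q.tgt β = v then some (-(ep h2.choose))
      else none
  | Sum.inr l => l.head?.map sg

/-- `ε` extended to forbidden threads. -/
noncomputable def forbEp (Q : Quiv) (sg ep : Q.A → ℤ) : Pth Q → Option ℤ
  | Sum.inl v => forbSg Q sg ep (Sum.inl v)
  | Sum.inr l => l.getLast?.map ep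

/-- One step of the algorithm computing `φ_A`: from the permitted thread `H` one
passes backwards through the forbidden thread `Π` (of length `len`) ending at the
end of `H` with `ε(Π) = -ε(H)`, arriving at the permitted thread `H'` starting at
the start of `Π` with `σ(H') = -σ(Π)`. -/
noncomputable def AlgStep (Q : Quiv) (P : Rels Q) (sg ep : Q.A → ℤ)
    (H H' : Pth Q) (len : ℕ) : Prop :=
  IsPermThread Q P H ∧ IsPermThread Q P H' ∧
  ∃ Pi : Pth Q, IsForbThread Q P Pi ∧
    thEnd Q Pi = thEnd Q H ∧
    forbEp Q sg ep Pi = (permEp Q sg ep H).map (fun x => -x) ∧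
    thStart Q H' = thStart Q Pi ∧
    permSg Q sg ep H' = (forbSg Q sg ep Pi).map (fun x => -x) ∧
    len = thLen Q Pi

/-- The permitted thread `H` returns to itself for the first time after exactly `n`
steps of the algorithm, and the total length of the forbidden threads used is `m`. -/
noncomputable def CycleData (Q : Quiv) (P : Rels Q) (sg ep : Q.A → ℤ)
    (H : Pth Q) (n m : ℕ) : Prop :=
  0 < n ∧ IsPermThread Q P H ∧
  ∃ (f : ℕ → Pth Q) (g : ℕ → ℕ),
    f 0 = H ∧ f n = H ∧
    (∀ i, i < n → AlgStep Q P sg ep (f i) (f (i + 1)) (g i)) ∧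
    (∀ i, 0 < i → i < n → f i ≠ H) ∧
    m = ∑ i ∈ Finset.range n, g i

/-- A directed cycle in which each pair of (cyclically) consecutive arrows is a
relation; recorded as a nonempty duplicate-free list of arrows. -/
def IsRelCycle (Q : Quiv) (P : Rels Q) (l : List Q.A) : Prop :=
  l ≠ [] ∧ l.Nodup ∧ List.Chain' (forbPair Q P) l ∧
  ∃ a b : Q.A, l.head? = some a ∧ l.getLast? = some b ∧ Q.tgt b = Q.src a ∧ P b a

/-- The derived invariant `φ_A : ℕ² → ℕ` of a gentle algebra `A = kQ/⟨P⟩`.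
For `n ≥ 1`, `φ_A(n,m)` counts the cycles of the algorithm which use `n` permitted
threads and forbidden threads of total length `m` (each such cycle consists of `n`
permitted threads, whence the division); `φ_A(0,m)` counts the directed cycles of
length `m` in which any two consecutive arrows form a relation (counted up to
rotation: such a cycle of length `m` has exactly `m` rotations). -/
noncomputable def phi (Q : Quiv) (P : Rels Q) (sg ep : Q.A → ℤ) : ℕ × ℕ → ℕ :=
  fun p => match p with
  | (0, m) => Nat.card {l : List Q.A // IsRelCycle Q P l ∧ l.length = m} / m
  | (n + 1, m) => Nat.card {H : Pth Q // CycleData Q P sg ep H (n + 1) m} / (n + 1)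

/-- The Kronecker quiver: two vertices and two parallel arrows. -/
def IsKronecker (Q : Quiv) : Prop :=
  ∃ (v w : Q.V) (a b : Q.A), v ≠ w ∧ a ≠ b ∧ (∀ u : Q.V, u = v ∨ u = w) ∧
    (∀ c : Q.A, c = a ∨ c = b) ∧ (∀ c : Q.A, Q.src c = v ∧ Q.tgt c = w)

end GentlePaper

namespace GentlePaper

/-- Composition of paths: `pcomp Q C D` is the path `C∘D` ("first `D`, then `C`"),
or `none` if the paths are not composable. -/
def pcomp (Q : Quiv) : Pth Q → Pth Q → Option (Pth Q)
  | Sum.inl v, Sum.inl w => if v = w then some (Sum.inl v) else none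
  | Sum.inl v, Sum.inr l => if thEnd Q (Sum.inr l) = some v then some (Sum.inr l) else none
  | Sum.inr l, Sum.inl v => if thStart Q (Sum.inr l) = some v then some (Sum.inr l) else none
  | Sum.inr l, Sum.inr l' => some (Sum.inr (l' ++ l))

/-- The index set `Γ` of the canonical basis of `kQ/⟨P⟩`: residue classes of the
paths of `Q` not lying in `⟨P⟩`. -/
def Gam (Q : Quiv) (P : Rels Q) := {p : Pth Q // pthOk Q P p}

/-- The trivial path `1_v` as an element of `Γ`. -/
def trivGam (Q : Quiv) (P : Rels Q) (v : Q.V) : Gam Q P := ⟨Sum.inl v, trivial⟩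

/-- An arrow `a` as an element of `Γ`. -/
def arrGam (Q : Quiv) (P : Rels Q) (a : Q.A) : Gam Q P :=
  ⟨Sum.inr [a], ⟨List.cons_ne_nil a [], List.isChain_singleton a⟩⟩

/-- The basis vector attached to a path, or `0` if the path lies in `⟨P⟩`. -/
noncomputable def basImg {k : Type} [Field k] {Q : Quiv} {P : Rels Q} {A : Type}
    [Ring A] [Algebra k A] (bas : Module.Basis (Gam Q P) k A) (p : Pth Q) : A :=
  if h : pthOk Q P p then bas ⟨p, h⟩ else 0

/-- A presentation of the `k`-algebra `A` as the path algebra `kQ/⟨P⟩`: a `k`-basis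
indexed by the residue classes of nonzero paths, multiplying as paths do, with the
identity being the sum of the trivial paths.  An algebra admitting such a
presentation is precisely one isomorphic to `kQ/⟨P⟩`. -/
structure PathAlgPresentation (k : Type) [Field k] (Q : Quiv) (P : Rels Q)
    (A : Type) [Ring A] [Algebra k A] where
  bas : Module.Basis (Gam Q P) k A
  mul_bas : ∀ C D : Gam Q P,
    bas C * bas D = (pcomp Q C.1 D.1).elim 0 (basImg bas)
  one_bas : (1 : A) = ∑ v : Q.V, bas (trivGam Q P v)

namespace PathAlgPresentation

variable {k : Type} [Field k] {Q : Quiv} {P : Rels Q} {A : Type} [Ring A] [Algebra k A]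

/-- The idempotent `1_v` of the presented algebra. -/
noncomputable def e (pp : PathAlgPresentation k Q P A) (v : Q.V) : A :=
  pp.bas (trivGam Q P v)

/-- The coefficient `f_C(D)` of the basis element `C` in the expansion of `f(D)`. -/
noncomputable def coeff (pp : PathAlgPresentation k Q P A)
    (f : A ≃ₐ[k] A) (C D : Gam Q P) : k :=
  pp.bas.repr (f (pp.bas D)) C

/-- Membership in `Aut^l(A)`: algebra automorphisms fixing all the `1_v`. -/
def MemAutL (pp : PathAlgPresentation k Q P A) (f : A ≃ₐ[k] A) : Prop :=
  ∀ v : Q.V, f (pp.e v) = pp.e v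

/-- Membership in `Aut₊^l(A) = {f ∈ Aut^l(A) | f_α(α) ≠ 0 for all arrows α}`. -/
noncomputable def MemAutStar (pp : PathAlgPresentation k Q P A) (f : A ≃ₐ[k] A) : Prop :=
  pp.MemAutL f ∧ ∀ a : Q.A, pp.coeff f (arrGam Q P a) (arrGam Q P a) ≠ 0

/-- Membership in `S(Q₁)`: automorphisms in `Aut₊^l(A)` rescaling every arrow. -/
noncomputable def MemSQ1 (pp : PathAlgPresentation k Q P A) (f : A ≃ₐ[k] A) : Prop :=
  pp.MemAutStar f ∧ ∀ a : Q.A, ∃ c : kˣ,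
    f (pp.bas (arrGam Q P a)) = (c : k) • pp.bas (arrGam Q P a)

/-- Membership in `N(A) = {f ∈ Aut₊^l(A) | f_α(α) = 1 for all arrows α}`. -/
noncomputable def MemNA (pp : PathAlgPresentation k Q P A) (f : A ≃ₐ[k] A) : Prop :=
  pp.MemAutStar f ∧ ∀ a : Q.A, pp.coeff f (arrGam Q P a) (arrGam Q P a) = 1

/-- Membership of an element in the subalgebra `⊕_{v ∈ Q₀} 1_v A 1_v`. -/
noncomputable def IsDiag (pp : PathAlgPresentation k Q P A) (x : A) : Prop :=
  (∑ v : Q.V, pp.e v * x * pp.e v) = x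

/-- Membership in `Inn^l(A)`: inner automorphisms `ι_x` with `x` an invertible
element of `⊕_v 1_v A 1_v`. -/
noncomputable def MemInnL (pp : PathAlgPresentation k Q P A) (f : A ≃ₐ[k] A) : Prop :=
  ∃ x : Aˣ, pp.IsDiag (x : A) ∧ ∀ a : A, f a = (↑x⁻¹ : A) * a * (x : A)

/-- Membership in `Inn_S^l(A)`: inner automorphisms `ι_s`, `s = Σ_v c_v 1_v`, `c_v ∈ k*`. -/
noncomputable def MemInnS (pp : PathAlgPresentation k Q P A) (f : A ≃ₐ[k] A) : Prop :=
  ∃ (c : Q.V → kˣ) (x : Aˣ), ((x : A) = ∑ v : Q.V, (c v : k) • pp.e v) ∧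
    ∀ a : A, f a = (↑x⁻¹ : A) * a * (x : A)

/-- Membership in `Inn_N^l(A)`: inner automorphisms `ι_u`, `u = Σ_v (1_v + n_v)`,
with `n_v ∈ 1_v A 1_v` nilpotent. -/
noncomputable def MemInnN (pp : PathAlgPresentation k Q P A) (f : A ≃ₐ[k] A) : Prop :=
  ∃ (x : Aˣ) (n : Q.V → A), (∀ v : Q.V, IsNilpotent (n v)) ∧
    (∀ v : Q.V, pp.e v * n v * pp.e v = n v) ∧
    ((x : A) = ∑ v : Q.V, (pp.e v + n v)) ∧
    ∀ a : A, f a = (↑x⁻¹ : A) * a * (x : A)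

end PathAlgPresentation

end GentlePaper


namespace GentlePaper

open PathAlgPresentation

/-!
Arrows are nilpotent and the coefficient of a trivial path `1_v` is multiplicative, so every
automorphism sends an arrow into the arrow ideal; hence `f` never decreases path length, and for
paths `C = c₁⋯cₙ`, `D = d₁⋯dₙ` of equal length `f_C(D) = ∏ f_{cᵢ}(dᵢ)`. For `f ∈ Aut^l(A)`
the coefficient `f_c(d)` vanishes unless `c` and `d` are parallel. If `a ≠ b` are parallel,
connectedness and the exclusion of the Kronecker quiver give an arrow `γ` next to them, and
gentleness makes exactly one of `γa`, `γb` (or of `aγ`, `bγ`) a relation, say `γa ∈ P` and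
`γb ∉ P`. Then `f(a)f(γ) = 0` has coefficient `f_b(a) f_γ(γ)` at `bγ`, so `f_b(a) = 0` on
`Aut₊^l(A)`. Ordering each parallel pair accordingly, and paths by length and then
lexicographically, gives the order.
-/

/-- Sort by the fibre, then by whether `r x y` fails for the other element `y` of the fibre of `x`,
then arbitrarily. -/
lemma exists_linearOrder_of_fibers {α β : Type*} (p : α → β) (r : α → α → Prop)
    (hfib : ∀ x y z, x ≠ y → p x = p y → p z = p x → z = x ∨ z = y)
    (htot : ∀ x y, x ≠ y → p x = p y → r x y ∨ r y x) :
    ∃ _ : LinearOrder α, ∀ x y, p x = p y → x < y → r x y := by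
  classical
  let flag (x : α) : Bool := decide (∃ y ≠ x, p y = p x ∧ ¬ r x y)
  let key (x : α) : Lex (Cardinal × Lex (Bool × Cardinal)) :=
    toLex (embeddingToCardinal (p x), toLex (flag x, embeddingToCardinal x))
  have hkey : Function.Injective key := fun x y h =>
    embeddingToCardinal.injective (congrArg (fun z => (ofLex (ofLex z).2).2) h)
  refine ⟨LinearOrder.lift' key hkey, fun x y hp (hlt : key x < key y) => ?_⟩
  by_contra hxy
  have hne : x ≠ y := by rintro rfl; exact lt_irrefl _ hlt
  have hyx := (htot x y hne hp).resolve_left hxy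
  have hfx : flag x = true := decide_eq_true ⟨y, hne.symm, hp.symm, hxy⟩
  have hfy : flag y = false := decide_eq_false fun ⟨z, hzy, hz, hyz⟩ =>
    (hfib x y z hne hp (hz.trans hp.symm)).elim (fun h => hyz (h ▸ hyx)) hzy
  simp only [key, hp, hfx, hfy, Prod.Lex.toLex_lt_toLex, lt_self_iff_false, true_and, false_or,
    reduceCtorEq, false_and, or_false] at hlt
  exact absurd hlt (by decide)

section Paths

variable {Q : Quiv} {P : Rels Q}

lemma thLen_pcomp {p q r : Pth Q} (h : pcomp Q p q = some r) :
    thLen Q r = thLen Q p + thLen Q q := by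
  rcases p with v | l <;> rcases q with w | m <;> simp only [pcomp] at h <;>
    (try split_ifs at h) <;> cases h <;> simp [thLen, add_comm]

lemma pcomp_eq_some_inl {p q : Pth Q} {v : Q.V} (h : pcomp Q p q = some (Sum.inl v)) :
    p = Sum.inl v ∧ q = Sum.inl v := by
  rcases p with u | l <;> rcases q with w | m <;> simp only [pcomp] at h <;>
    (try split_ifs at h with huw) <;> cases h
  exact ⟨rfl, congrArg Sum.inl huw.symm⟩

lemma pcomp_inl_right_eq_some {p r : Pth Q} {v : Q.V} (h : pcomp Q p (Sum.inl v) = some r) :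
    r = p ∧ thStart Q p = some v := by
  rcases p with u | l <;> simp only [pcomp] at h <;> split_ifs at h with hc <;> cases h
  · exact ⟨rfl, congrArg some hc⟩
  · exact ⟨rfl, hc⟩

lemma pcomp_inl_left_eq_some {q r : Pth Q} {w : Q.V} (h : pcomp Q (Sum.inl w) q = some r) :
    r = q ∧ thEnd Q q = some w := by
  rcases q with u | l <;> simp only [pcomp] at h <;> split_ifs at h with hc <;> cases h
  · subst hc; exact ⟨rfl, rfl⟩
  · exact ⟨rfl, hc⟩

lemma pcomp_eq_some_cons {p q : Pth Q} {c : Q.A} {m : List Q.A}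
    (h : pcomp Q p q = some (Sum.inr (c :: m))) (hq : thLen Q q = 1) (hm : m ≠ []) :
    p = Sum.inr m ∧ q = Sum.inr [c] := by
  rcases q with w | l
  · exact absurd hq (by simp [thLen])
  obtain ⟨d, rfl⟩ := List.length_eq_one_iff.mp hq
  rcases p with u | l'
  · simp only [pcomp] at h
    split_ifs at h
    cases h
    exact absurd rfl hm
  · simp only [pcomp, List.singleton_append] at h
    cases h
    exact ⟨rfl, rfl⟩

lemma eq_inl_of_thLen_eq_zero {p : Pth Q} (hp : pthOk Q P p) (h : thLen Q p = 0) :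
    ∃ v, p = Sum.inl v := by
  rcases p with v | l
  · exact ⟨v, rfl⟩
  · exact absurd (List.eq_nil_of_length_eq_zero h) hp.1

lemma pthOk_of_cons {d : Q.A} {l : List Q.A} (h : pthOk Q P (Sum.inr (d :: l))) (hl : l ≠ []) :
    pthOk Q P (Sum.inr l) :=
  ⟨hl, h.2.tail⟩

def listGam (l : List Q.A) (h : pthOk Q P (Sum.inr l)) : Gam Q P := ⟨Sum.inr l, h⟩

def arrowList : Pth Q → List Q.A
  | Sum.inl _ => []
  | Sum.inr l => l

lemma arrowList_injective :
    Function.Injective fun C : {C : Gam Q P // 1 ≤ thLen Q C.1} => arrowList C.1.1 := by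
  rintro ⟨⟨_ | c, hc⟩, hC⟩ ⟨⟨_ | d, hd⟩, hD⟩ (h : arrowList _ = arrowList _)
  any_goals exact absurd ‹1 ≤ thLen Q (Sum.inl _)› (Nat.not_succ_le_zero 0)
  cases h
  rfl

end Paths

namespace IsGentle

variable {Q : Quiv} {P : Rels Q}

lemma exists_thLen_lt (hg : IsGentle Q P) : ∃ N, ∀ C : Gam Q P, thLen Q C.1 < N := by
  obtain ⟨N, hN⟩ := hg.bounded
  refine ⟨N + 1, fun ⟨p, hp⟩ => ?_⟩
  rcases p with v | l
  · exact Nat.succ_pos N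
  · suffices l.length < N from Nat.lt_succ_of_lt this
    by_contra! hlen
    have hch := hp.2.take N
    obtain ⟨l₁, a, b, l₂, hdec, hab⟩ :=
      hN (l.take N) (hch.imp fun {_ _} h => h.1) (List.length_take_of_le hlen)
    have hpair := hch.infix (l₁ := [a, b]) ⟨l₁, l₂, by simp [hdec]⟩
    rw [List.isChain_cons_cons] at hpair
    exact hpair.1.2 hab

lemma not_forall_permPair (hg : IsGentle Q P) (g : ℕ → Q.A) :
    ¬ ∀ i, permPair Q P (g i) (g (i + 1)) := by
  intro hperm
  obtain ⟨N, hN⟩ := hg.exists_thLen_lt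
  have hok : pthOk Q P (Sum.inr ((List.range (N + 1)).map g)) := by
    refine ⟨by simp, ?_⟩
    rw [List.Chain', List.isChain_map]
    exact (List.isChain_range_succ _ N).mpr fun i _ => hperm i
  have := hN ⟨_, hok⟩
  simp [thLen] at this

lemma eq_or_eq_of_src_eq (hg : IsGentle Q P) {a b c : Q.A} (hab : a ≠ b)
    (hs : Q.src a = Q.src b) (hc : Q.src c = Q.src a) : c = a ∨ c = b := by
  by_contra! h
  have := Fintype.two_lt_card_iff.mpr ⟨(⟨c, hc⟩ : {x // Q.src x = Q.src a}), ⟨a, rfl⟩,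
    ⟨b, hs.symm⟩, by simpa using h.1, by simpa using h.2, by simpa using hab⟩
  exact absurd (hg.src_le_two _) (not_le.mpr this)

lemma eq_or_eq_of_tgt_eq (hg : IsGentle Q P) {a b c : Q.A} (hab : a ≠ b)
    (ht : Q.tgt a = Q.tgt b) (hc : Q.tgt c = Q.tgt a) : c = a ∨ c = b := by
  by_contra! h
  have := Fintype.two_lt_card_iff.mpr ⟨(⟨c, hc⟩ : {x // Q.tgt x = Q.tgt a}), ⟨a, rfl⟩,
    ⟨b, ht.symm⟩, by simpa using h.1, by simpa using h.2, by simpa using hab⟩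
  exact absurd (hg.tgt_le_two _) (not_le.mpr this)

/-- Two loops at one vertex would give permitted paths of every length. -/
lemma src_ne_tgt_of_parallel (hg : IsGentle Q P) {a b : Q.A} (hab : a ≠ b)
    (hs : Q.src a = Q.src b) (ht : Q.tgt a = Q.tgt b) : Q.src a ≠ Q.tgt a := by
  intro hloop
  have hcomp : ∀ x y, (x = a ∨ x = b) → (y = a ∨ y = b) → Q.tgt x = Q.src y := by
    rintro x y (rfl | rfl) (rfl | rfl) <;> simp only [← hs, ← ht, hloop]
  have hconst : ∀ x, x = a ∨ x = b → ¬ P x x → False := fun x hx hxx =>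
    hg.not_forall_permPair (fun _ => x) fun _ => ⟨hcomp x x hx hx, hxx⟩
  by_cases haa : P a a
  · by_cases hbb : P b b
    · have hab' : ¬ P a b := fun h => hab (hg.rel_succ_unique a a b haa h)
      have hba' : ¬ P b a := fun h => hab (hg.rel_succ_unique b b a hbb h).symm
      refine hg.not_forall_permPair (fun i => if Even i then a else b) fun i => ?_
      rcases Nat.even_or_odd i with hi | hi
      · simp only [hi, Nat.not_even_iff_odd.mpr hi.add_one, if_true, if_false]
        exact ⟨hcomp a b (.inl rfl) (.inr rfl), hab'⟩
      · simp only [Nat.not_even_iff_odd.mpr hi, hi.add_one, if_true, if_false]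
        exact ⟨hcomp b a (.inr rfl) (.inl rfl), hba'⟩
    · exact hconst b (.inr rfl) hbb
  · exact hconst a (.inl rfl) haa

lemma exists_adjacent_of_parallel (hg : IsGentle Q P) (hc : Connected Q) (hnk : ¬ IsKronecker Q)
    {a b : Q.A} (hab : a ≠ b) (hs : Q.src a = Q.src b) (ht : Q.tgt a = Q.tgt b) :
    ∃ γ : Q.A, Q.tgt γ = Q.src a ∨ Q.src γ = Q.tgt a := by
  by_contra! hno
  have hvert : ∀ u : Q.V, u = Q.src a ∨ u = Q.tgt a := by
    intro u
    induction hc.2 (Q.src a) u with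
    | refl => exact .inl rfl
    | tail _ hedge ih =>
      obtain ⟨γ, ⟨h1, h2⟩ | ⟨h1, h2⟩⟩ := hedge <;> rcases ih with hx | hx <;> subst hx
      · rcases hg.eq_or_eq_of_src_eq hab hs h1 with rfl | rfl
        · exact .inr h2.symm
        · exact .inr (h2.symm.trans ht.symm)
      · exact absurd h1 (hno γ).2
      · exact absurd h2 (hno γ).1
      · rcases hg.eq_or_eq_of_tgt_eq hab ht h2 with rfl | rfl
        · exact .inl h1.symm
        · exact .inl (h1.symm.trans hs.symm)
  have harr : ∀ c : Q.A, c = a ∨ c = b := fun c =>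
    (hvert (Q.src c)).elim (hg.eq_or_eq_of_src_eq hab hs) fun h => absurd h (hno c).2
  refine hnk ⟨Q.src a, Q.tgt a, a, b, hg.src_ne_tgt_of_parallel hab hs ht, hab, hvert, harr,
    fun c => ?_⟩
  rcases harr c with rfl | rfl
  · exact ⟨rfl, rfl⟩
  · exact ⟨hs.symm, ht.symm⟩

lemma rel_xor_of_tgt_eq_src (hg : IsGentle Q P) {a b γ : Q.A} (hab : a ≠ b)
    (ha : Q.tgt γ = Q.src a) (hb : Q.tgt γ = Q.src b) :
    P γ a ∧ permPair Q P γ b ∨ P γ b ∧ permPair Q P γ a := by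
  by_cases hγa : P γ a
  · exact .inl ⟨hγa, hb, fun hγb => hab (hg.rel_succ_unique γ a b hγa hγb)⟩
  · refine .inr ⟨?_, ha, hγa⟩
    by_contra hγb
    exact hab (hg.nonrel_succ_unique γ a b ha.symm hb.symm hγa hγb)

lemma rel_xor_of_src_eq_tgt (hg : IsGentle Q P) {a b γ : Q.A} (hab : a ≠ b)
    (ha : Q.src γ = Q.tgt a) (hb : Q.src γ = Q.tgt b) :
    P a γ ∧ permPair Q P b γ ∨ P b γ ∧ permPair Q P a γ := by
  by_cases haγ : P a γ
  · exact .inl ⟨haγ, hb.symm, fun hbγ => hab (hg.rel_pred_unique γ a b haγ hbγ)⟩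
  · refine .inr ⟨?_, ha.symm, haγ⟩
    by_contra hbγ
    exact hab (hg.nonrel_pred_unique γ a b ha.symm hb.symm haγ hbγ)

end IsGentle

namespace PathAlgPresentation

variable {k : Type} [Field k] {Q : Quiv} {P : Rels Q} {A : Type} [Ring A] [Algebra k A]
  (pp : PathAlgPresentation k Q P A)

lemma repr_bas_mul_bas (C D E : Gam Q P) :
    pp.bas.repr (pp.bas C * pp.bas D) E = if pcomp Q C.1 D.1 = some E.1 then 1 else 0 := by
  rw [pp.mul_bas]
  split_ifs with hE
  · rw [hE, Option.elim, basImg, dif_pos E.2]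
    exact (pp.bas.repr_self_apply E E).trans (if_pos rfl)
  · rcases h : pcomp Q C.1 D.1 with _ | p
    · simp
    · simp only [Option.elim, basImg]
      split_ifs with hok
      · refine (pp.bas.repr_self_apply (⟨p, hok⟩ : Gam Q P) E).trans (if_neg ?_)
        rintro rfl
        exact hE h
      · simp

lemma repr_mul (x y : A) (E : Gam Q P) :
    pp.bas.repr (x * y) E = (pp.bas.repr y).sum fun D d => (pp.bas.repr x).sum fun C c =>
      if pcomp Q C.1 D.1 = some E.1 then c * d else 0 := by
  conv_lhs => rw [← pp.bas.linearCombination_repr x, ← pp.bas.linearCombination_repr y]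
  simp only [Finsupp.linearCombination_apply, Finsupp.sum_mul, Finsupp.mul_sum,
    smul_mul_smul_comm, map_finsuppSum, map_smul, Finsupp.sum_apply,
    Finsupp.smul_apply, repr_bas_mul_bas, smul_eq_mul, mul_ite, mul_one, mul_zero]

lemma repr_mul_of_unique {x y : A} {C₀ D₀ E : Gam Q P} (h₀ : pcomp Q C₀.1 D₀.1 = some E.1)
    (huniq : ∀ C D, pp.bas.repr x C ≠ 0 → pp.bas.repr y D ≠ 0 →
      pcomp Q C.1 D.1 = some E.1 → C = C₀ ∧ D = D₀) :
    pp.bas.repr (x * y) E = pp.bas.repr x C₀ * pp.bas.repr y D₀ := by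
  rw [repr_mul, Finsupp.sum_eq_single D₀ (fun D hD hDne => Finset.sum_eq_zero fun C hC =>
      if_neg fun hCE => hDne (huniq C D (Finsupp.mem_support_iff.mp hC) hD hCE).2) (by simp)]
  by_cases hD : pp.bas.repr y D₀ = 0
  · simp [hD]
  rw [Finsupp.sum_eq_single C₀
    (fun C hC hCne => if_neg fun hCE => hCne (huniq C D₀ hC hD hCE).1) (by simp), if_pos h₀]

lemma repr_mul_trivGam (x y : A) (v : Q.V) :
    pp.bas.repr (x * y) (trivGam Q P v) =
      pp.bas.repr x (trivGam Q P v) * pp.bas.repr y (trivGam Q P v) :=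
  pp.repr_mul_of_unique (if_pos rfl) fun _ _ _ _ h => by
    obtain ⟨hC, hD⟩ := pcomp_eq_some_inl h
    exact ⟨Subtype.ext hC, Subtype.ext hD⟩

/-- `x` lies in the `n`-th power of the arrow ideal. -/
def VanishesBelow (n : ℕ) (x : A) : Prop :=
  ∀ C : Gam Q P, thLen Q C.1 < n → pp.bas.repr x C = 0

variable {pp}

lemma VanishesBelow.le_thLen {n : ℕ} {x : A} (hx : pp.VanishesBelow n x) {C : Gam Q P}
    (hC : pp.bas.repr x C ≠ 0) : n ≤ thLen Q C.1 :=
  not_lt.mp fun hlt => hC (hx C hlt)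

lemma VanishesBelow.mul {m n : ℕ} {x y : A} (hx : pp.VanishesBelow m x)
    (hy : pp.VanishesBelow n y) : pp.VanishesBelow (m + n) (x * y) := by
  intro E hE
  rw [repr_mul]
  refine Finset.sum_eq_zero fun D hD => Finset.sum_eq_zero fun C hC => if_neg fun hCD => ?_
  have := thLen_pcomp hCD
  have := hx.le_thLen (Finsupp.mem_support_iff.mp hC)
  have := hy.le_thLen (Finsupp.mem_support_iff.mp hD)
  omega

lemma VanishesBelow.pow {x : A} (hx : pp.VanishesBelow 1 x) (n : ℕ) :
    pp.VanishesBelow n (x ^ n) := by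
  induction n with
  | zero => exact fun _ h => absurd h (Nat.not_lt_zero _)
  | succ n ih => rw [pow_succ]; exact ih.mul hx

lemma VanishesBelow.isNilpotent (hg : IsGentle Q P) {x : A} (hx : pp.VanishesBelow 1 x) :
    IsNilpotent x := by
  obtain ⟨N, hN⟩ := hg.exists_thLen_lt
  exact ⟨N, pp.bas.ext_elem fun C => by simpa using hx.pow N C (hN C)⟩

lemma repr_pow_succ_trivGam (x : A) (v : Q.V) (n : ℕ) :
    pp.bas.repr (x ^ (n + 1)) (trivGam Q P v) = pp.bas.repr x (trivGam Q P v) ^ (n + 1) := by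
  induction n with
  | zero => simp
  | succ n ih => rw [pow_succ, repr_mul_trivGam, ih, ← pow_succ]

lemma vanishesBelow_one_of_isNilpotent {x : A} (hx : IsNilpotent x) : pp.VanishesBelow 1 x := by
  intro C hC
  obtain ⟨v, hv⟩ := eq_inl_of_thLen_eq_zero C.2 (Nat.lt_one_iff.mp hC)
  obtain rfl : C = trivGam Q P v := Subtype.ext hv
  obtain ⟨n, hn⟩ := hx
  refine IsNilpotent.eq_zero ⟨n + 1, ?_⟩
  rw [← repr_pow_succ_trivGam, pow_succ, hn, zero_mul, map_zero, Finsupp.zero_apply]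

lemma vanishesBelow_one_bas_arrGam (a : Q.A) : pp.VanishesBelow 1 (pp.bas (arrGam Q P a)) :=
  fun C hC => (pp.bas.repr_self_apply _ C).trans <| if_neg fun h => by
    subst h
    exact absurd hC (by simp [arrGam, thLen])

variable {F : Type*} [FunLike F A A] [AlgHomClass F k A A]

lemma vanishesBelow_one_map_arrGam (hg : IsGentle Q P) (f : F) (a : Q.A) :
    pp.VanishesBelow 1 (f (pp.bas (arrGam Q P a))) :=
  vanishesBelow_one_of_isNilpotent (((vanishesBelow_one_bas_arrGam a).isNilpotent hg).map f)

lemma bas_cons {d : Q.A} {l : List Q.A} (h : pthOk Q P (Sum.inr (d :: l))) (hl : l ≠ []) :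
    pp.bas (listGam (d :: l) h) =
      pp.bas (listGam l (pthOk_of_cons h hl)) * pp.bas (arrGam Q P d) := by
  rw [pp.mul_bas]
  exact (dif_pos h : basImg pp.bas (Sum.inr (d :: l)) = _).symm

lemma bas_mul_bas_eq_zero_of_rel {s t : Q.A} (hst : P s t) :
    pp.bas (arrGam Q P t) * pp.bas (arrGam Q P s) = 0 := by
  rw [pp.mul_bas]
  exact dif_neg fun hok => (List.isChain_cons_cons.mp hok.2).1.2 hst

lemma repr_mul_cons {x y : A} {c : Q.A} {m : List Q.A} (hm : m ≠ [])
    (h : pthOk Q P (Sum.inr (c :: m))) (hx : pp.VanishesBelow m.length x)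
    (hy : pp.VanishesBelow 1 y) :
    pp.bas.repr (x * y) (listGam (c :: m) h) =
      pp.bas.repr x (listGam m (pthOk_of_cons h hm)) * pp.bas.repr y (arrGam Q P c) := by
  refine pp.repr_mul_of_unique rfl fun C D hC hD hCD => ?_
  have := thLen_pcomp hCD
  have := hx.le_thLen hC
  have := hy.le_thLen hD
  have : thLen Q (listGam (c :: m) h).1 = m.length + 1 := rfl
  obtain ⟨hC', hD'⟩ := pcomp_eq_some_cons hCD (by omega) hm
  exact ⟨Subtype.ext hC', Subtype.ext hD'⟩

lemma vanishesBelow_map_path (hg : IsGentle Q P) (f : F) :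
    ∀ (l : List Q.A) (h : pthOk Q P (Sum.inr l)),
      pp.VanishesBelow l.length (f (pp.bas (listGam l h)))
  | [], h => absurd rfl h.1
  | [d], _ => vanishesBelow_one_map_arrGam hg f d
  | d :: d' :: l, h => by
    rw [bas_cons h (List.cons_ne_nil d' l), map_mul]
    exact (vanishesBelow_map_path hg f _ _).mul (vanishesBelow_one_map_arrGam hg f d)

lemma repr_map_cons (hg : IsGentle Q P) (f : F) {c d : Q.A} {l m : List Q.A} (hl : l ≠ [])
    (hm : m ≠ []) (hlm : m.length = l.length) (hd : pthOk Q P (Sum.inr (d :: l)))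
    (hc : pthOk Q P (Sum.inr (c :: m))) :
    pp.bas.repr (f (pp.bas (listGam (d :: l) hd))) (listGam (c :: m) hc) =
      pp.bas.repr (f (pp.bas (listGam l (pthOk_of_cons hd hl))))
          (listGam m (pthOk_of_cons hc hm)) *
        pp.bas.repr (f (pp.bas (arrGam Q P d))) (arrGam Q P c) := by
  rw [bas_cons hd hl, map_mul]
  exact repr_mul_cons hm hc (hlm ▸ vanishesBelow_map_path hg f l _)
    (vanishesBelow_one_map_arrGam hg f d)

/-- The coefficient of a path in the image of a path of the same length is the product of the
coefficients of their arrows, so it vanishes as soon as one of them does. -/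
lemma repr_map_path_eq_zero_of_lt [LinearOrder Q.A] (hg : IsGentle Q P) (f : F)
    (harrow : ∀ c d : Q.A, c < d → pp.bas.repr (f (pp.bas (arrGam Q P d))) (arrGam Q P c) = 0) :
    ∀ (l m : List Q.A) (hl : pthOk Q P (Sum.inr l)) (hm : pthOk Q P (Sum.inr m)),
      m.length = l.length → m < l → pp.bas.repr (f (pp.bas (listGam l hl))) (listGam m hm) = 0
  | [], _, hl, _, _, _ => absurd rfl hl.1
  | _ :: _, [], _, _, hlen, _ => absurd hlen (by simp)
  | [d], [c], _, _, _, hlt =>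
    harrow c d ((List.cons_lt_cons_iff.mp hlt).resolve_right fun h => List.not_lt_nil _ h.2)
  | [_], _ :: _ :: _, _, _, hlen, _ => absurd hlen (by simp)
  | _ :: _ :: _, [_], _, _, hlen, _ => absurd hlen (by simp)
  | d :: d' :: l, c :: c' :: m, hl, hm, hlen, hlt => by
    have hlen' : (c' :: m).length = (d' :: l).length := by simpa using hlen
    rw [repr_map_cons hg f (List.cons_ne_nil _ _) (List.cons_ne_nil _ _) hlen']
    rcases List.cons_lt_cons_iff.mp hlt with hcd | ⟨rfl, hlt'⟩
    · rw [harrow c d hcd, mul_zero]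
    · rw [repr_map_path_eq_zero_of_lt hg f harrow _ _ _ _ hlen' hlt', zero_mul]

lemma bas_arrGam_mul_e (a : Q.A) :
    pp.bas (arrGam Q P a) * pp.e (Q.src a) = pp.bas (arrGam Q P a) := by
  rw [e, pp.mul_bas]
  exact (congrArg (Option.elim · 0 (basImg pp.bas)) (if_pos rfl)).trans (dif_pos _)

lemma e_mul_bas_arrGam (a : Q.A) :
    pp.e (Q.tgt a) * pp.bas (arrGam Q P a) = pp.bas (arrGam Q P a) := by
  rw [e, pp.mul_bas]
  exact (congrArg (Option.elim · 0 (basImg pp.bas)) (if_pos rfl)).trans (dif_pos _)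

lemma repr_eq_zero_of_mul_e {x : A} {v : Q.V} (hx : x * pp.e v = x) {C : Gam Q P}
    (hC : thStart Q C.1 ≠ some v) : pp.bas.repr x C = 0 := by
  rw [← hx, repr_mul]
  refine Finset.sum_eq_zero fun D hD => Finset.sum_eq_zero fun C' _ => if_neg fun h => hC ?_
  rw [e, pp.bas.repr_self, Finsupp.support_single _ one_ne_zero,
    Finset.mem_singleton] at hD
  subst hD
  obtain ⟨hC', hs⟩ := pcomp_inl_right_eq_some h
  rwa [hC']

lemma repr_eq_zero_of_e_mul {x : A} {w : Q.V} (hx : pp.e w * x = x) {C : Gam Q P}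
    (hC : thEnd Q C.1 ≠ some w) : pp.bas.repr x C = 0 := by
  rw [← hx, repr_mul]
  refine Finset.sum_eq_zero fun D _ => Finset.sum_eq_zero fun C' hC' => if_neg fun h => hC ?_
  rw [e, pp.bas.repr_self, Finsupp.support_single _ one_ne_zero,
    Finset.mem_singleton] at hC'
  subst hC'
  obtain ⟨hD, ht⟩ := pcomp_inl_left_eq_some h
  rwa [hD]

lemma parallel_of_coeff_ne_zero {f : A ≃ₐ[k] A} (hf : pp.MemAutL f) {c d : Q.A}
    (h : pp.coeff f (arrGam Q P c) (arrGam Q P d) ≠ 0) :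
    Q.src c = Q.src d ∧ Q.tgt c = Q.tgt d := by
  have hs : f (pp.bas (arrGam Q P d)) * pp.e (Q.src d) = f (pp.bas (arrGam Q P d)) := by
    rw [← hf, ← map_mul, bas_arrGam_mul_e]
  have ht : pp.e (Q.tgt d) * f (pp.bas (arrGam Q P d)) = f (pp.bas (arrGam Q P d)) := by
    rw [← hf, ← map_mul, e_mul_bas_arrGam]
  have hs' := not_not.mp (mt (repr_eq_zero_of_mul_e hs (C := arrGam Q P c)) h)
  have ht' := not_not.mp (mt (repr_eq_zero_of_e_mul ht (C := arrGam Q P c)) h)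
  exact ⟨Option.some.inj hs', Option.some.inj ht'⟩

/-- `f(t) f(s) = f(ts) = 0`, while its coefficient at the permitted path `vu` is `f_v(t) f_u(s)`. -/
lemma repr_mul_repr_eq_zero_of_rel (hg : IsGentle Q P) (f : F) {s t u v : Q.A} (hst : P s t)
    (huv : permPair Q P u v) :
    pp.bas.repr (f (pp.bas (arrGam Q P t))) (arrGam Q P v) *
      pp.bas.repr (f (pp.bas (arrGam Q P s))) (arrGam Q P u) = 0 := by
  have hok : pthOk Q P (Sum.inr [u, v]) := ⟨List.cons_ne_nil _ _, List.isChain_pair.mpr huv⟩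
  calc _ = pp.bas.repr (f (pp.bas (arrGam Q P t)) * f (pp.bas (arrGam Q P s)))
        (listGam [u, v] hok) :=
      (repr_mul_cons (List.cons_ne_nil v []) hok (vanishesBelow_one_map_arrGam hg f t)
        (vanishesBelow_one_map_arrGam hg f s)).symm
    _ = 0 := by
      rw [← map_mul, bas_mul_bas_eq_zero_of_rel hst, map_zero, map_zero, Finsupp.zero_apply]

lemma coeff_eq_zero_or_of_parallel (hg : IsGentle Q P) (hc : Connected Q) (hnk : ¬ IsKronecker Q)
    {a b : Q.A} (hab : a ≠ b) (hs : Q.src a = Q.src b) (ht : Q.tgt a = Q.tgt b) :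
    (∀ f : A ≃ₐ[k] A, pp.MemAutStar f → pp.coeff f (arrGam Q P a) (arrGam Q P b) = 0) ∨
      ∀ f : A ≃ₐ[k] A, pp.MemAutStar f → pp.coeff f (arrGam Q P b) (arrGam Q P a) = 0 := by
  obtain ⟨γ, hγ | hγ⟩ := hg.exists_adjacent_of_parallel hc hnk hab hs ht
  · rcases hg.rel_xor_of_tgt_eq_src hab hγ (hγ.trans hs) with
      ⟨hrel, hperm⟩ | ⟨hrel, hperm⟩
    · exact .inr fun f hf =>
        (mul_eq_zero.mp (repr_mul_repr_eq_zero_of_rel hg f hrel hperm)).resolve_right (hf.2 γ)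
    · exact .inl fun f hf =>
        (mul_eq_zero.mp (repr_mul_repr_eq_zero_of_rel hg f hrel hperm)).resolve_right (hf.2 γ)
  · rcases hg.rel_xor_of_src_eq_tgt hab hγ (hγ.trans ht) with
      ⟨hrel, hperm⟩ | ⟨hrel, hperm⟩
    · exact .inr fun f hf =>
        (mul_eq_zero.mp (repr_mul_repr_eq_zero_of_rel hg f hrel hperm)).resolve_left (hf.2 γ)
    · exact .inl fun f hf =>
        (mul_eq_zero.mp (repr_mul_repr_eq_zero_of_rel hg f hrel hperm)).resolve_left (hf.2 γ)

variable (pp) in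
lemma exists_linearOrder_arrows (hg : IsGentle Q P) (hc : Connected Q) (hnk : ¬ IsKronecker Q) :
    ∃ _ : LinearOrder Q.A, ∀ f : A ≃ₐ[k] A, pp.MemAutStar f →
      ∀ c d : Q.A, c < d → pp.coeff f (arrGam Q P c) (arrGam Q P d) = 0 := by
  obtain ⟨inst, horder⟩ := exists_linearOrder_of_fibers (fun a => (Q.src a, Q.tgt a))
    (fun c d => ∀ f : A ≃ₐ[k] A, pp.MemAutStar f →
      pp.coeff f (arrGam Q P c) (arrGam Q P d) = 0)
    (fun _ _ _ hxy hp hz => hg.eq_or_eq_of_src_eq hxy (Prod.ext_iff.1 hp).1 (Prod.ext_iff.1 hz).1)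
    (fun _ _ hxy hp => coeff_eq_zero_or_of_parallel hg hc hnk hxy (Prod.ext_iff.1 hp).1
      (Prod.ext_iff.1 hp).2)
  refine ⟨inst, fun f hf c d hcd => ?_⟩
  by_contra h
  obtain ⟨hs, ht⟩ := parallel_of_coeff_ne_zero hf.1 h
  exact h (horder c d (Prod.ext hs ht) hcd f hf)

end PathAlgPresentation

theorem exists_total_order_general
    (k : Type) [Field k] (Q : Quiv) (P : Rels Q)
    (A : Type) [Ring A] [Algebra k A]
    (pp : PathAlgPresentation k Q P A) (hg : IsGentle Q P)
    (hc : Connected Q) (hnk : ¬ IsKronecker Q) :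
    ∃ inst : LinearOrder {C : Gam Q P // 1 ≤ thLen Q C.1},
      ∀ f : A ≃ₐ[k] A, pp.MemAutStar f →
        ∀ C D : {C : Gam Q P // 1 ≤ thLen Q C.1},
          (letI := inst; C < D) → pp.coeff f C.1 D.1 = 0 := by
  obtain ⟨_, harrow⟩ := pp.exists_linearOrder_arrows hg hc hnk
  let key (C : {C : Gam Q P // 1 ≤ thLen Q C.1}) : Lex (ℕ × List Q.A) :=
    toLex ((arrowList C.1.1).length, arrowList C.1.1)
  refine ⟨LinearOrder.lift' key fun C D h => arrowList_injective (congrArg (ofLex · |>.2) h),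
    fun f hf C D (hlt : key C < key D) => ?_⟩
  rcases C with ⟨⟨_ | m, hm⟩, hC⟩
  · exact absurd hC (Nat.not_succ_le_zero 0)
  rcases D with ⟨⟨_ | l, hl⟩, hD⟩
  · exact absurd hD (Nat.not_succ_le_zero 0)
  rcases Prod.Lex.lt_iff.mp hlt with hlen | ⟨hlen, hlex⟩
  · exact vanishesBelow_map_path hg f l hl (listGam m hm) hlen
  · exact repr_map_path_eq_zero_of_lt hg f (harrow f hf) l m hl hm hlen hlex

/-- There is a total order on `Γ≥1` such that `C < D` implies `f_C(D) = 0` for every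
`f ∈ Aut₊^l(A)`. -/
theorem exists_total_order
    (k : Type) [Field k] [IsAlgClosed k] (Q : Quiv) (P : Rels Q)
    (A : Type) [Ring A] [Algebra k A]
    (pp : PathAlgPresentation k Q P A) (hg : IsGentle Q P)
    (hc : Connected Q) (hnk : ¬ IsKronecker Q) :
    ∃ inst : LinearOrder {C : Gam Q P // 1 ≤ thLen Q C.1},
      ∀ f : A ≃ₐ[k] A, pp.MemAutStar f →
        ∀ C D : {C : Gam Q P // 1 ≤ thLen Q C.1},
          (letI := inst; C < D) → pp.coeff f C.1 D.1 = 0 :=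
  exists_total_order_general k Q P A pp hg hc hnk

end GentlePaper
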